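/- arXiv:1103.0485 — 3 statements merged into one kernel-verified Lean document; each statement's English description precedes it below -/
import Mathlib

section
/- Let f : I → ℝ be smooth on an interval I and absolutely monotonic (all derivatives nonnegative on I), and let t₁ ∈ I. Then the function g defined by g(t) = (f(t) - f(t₁))/(t - t₁) for t ≠ t₁ and g(t₁) = f'(t₁) is absolutely monotonic on I. -/
open Set Filter MeasureTheory intervalIntegral
open scoped Topology


private lemma key_deriv (I : Set ℝ) (conv : Convex ℝ I) (t₁ : ℝ) (ht₁ : t₁ ∈ I)
    (φ φ' : ℝ → ℝ) (hφd : ∀ x ∈ I, HasDerivWithinAt φ (φ' x) I x)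
    (hφ'c : ContinuousOn φ' I) (k : ℕ) (t : ℝ) (ht : t ∈ I) :
    HasDerivWithinAt (fun u => ∫ s in (0:ℝ)..1, s ^ k * φ (t₁ + s * (u - t₁)))
      (∫ s in (0:ℝ)..1, s ^ (k+1) * φ' (t₁ + s * (t - t₁))) I t := by
  have hφc : ContinuousOn φ I := fun x hx => (hφd x hx).continuousWithinAt
  have hmemI : ∀ u ∈ I, ∀ s ∈ Icc (0:ℝ) 1, t₁ + s * (u - t₁) ∈ I := by
    intro u hu s hs
    have h := conv ht₁ hu (by linarith [hs.2] : (0:ℝ) ≤ 1 - s) hs.1 (by ring)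
    have : (1 - s) • t₁ + s • u = t₁ + s * (u - t₁) := by simp [smul_eq_mul]; ring
    rwa [this] at h
  have hcont : ∀ (m : ℕ) (ψ : ℝ → ℝ), ContinuousOn ψ I → ∀ u ∈ I,
      ContinuousOn (fun s => s ^ m * ψ (t₁ + s * (u - t₁))) (Icc (0:ℝ) 1) := by
    intro m ψ hψ u hu
    refine ((continuous_pow m).continuousOn).mul (hψ.comp (by fun_prop) ?_)
    intro s hs; exact hmemI u hu s hs
  have hInt : ∀ (m : ℕ) (ψ : ℝ → ℝ), ContinuousOn ψ I → ∀ u ∈ I,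
      IntervalIntegrable (fun s => s ^ m * ψ (t₁ + s * (u - t₁))) volume 0 1 := by
    intro m ψ hψ u hu
    apply ContinuousOn.intervalIntegrable
    rw [uIcc_of_le zero_le_one]
    exact hcont m ψ hψ u hu
  -- choose a, b in I with eventual containment
  have hev : ∃ a b : ℝ, a ∈ I ∧ b ∈ I ∧ a ≤ t ∧ t ≤ b ∧ ∀ᶠ t' in 𝓝[I] t, t' ∈ Icc a b := by
    have hB : ∃ b : ℝ, b ∈ I ∧ t ≤ b ∧ ∀ᶠ t' in 𝓝[I] t, t' ≤ b := by
      by_cases hb : ∃ b ∈ I, t < b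
      · obtain ⟨b, hbI, htb⟩ := hb
        exact ⟨b, hbI, htb.le, ((eventually_lt_nhds htb).filter_mono nhdsWithin_le_nhds).mono
          fun x hx => hx.le⟩
      · push_neg at hb
        exact ⟨t, ht, le_rfl, by filter_upwards [self_mem_nhdsWithin] with x hx using hb x hx⟩
    have hA : ∃ a : ℝ, a ∈ I ∧ a ≤ t ∧ ∀ᶠ t' in 𝓝[I] t, a ≤ t' := by
      by_cases ha : ∃ a ∈ I, a < t
      · obtain ⟨a, haI, hat⟩ := ha
        exact ⟨a, haI, hat.le, ((eventually_gt_nhds hat).filter_mono nhdsWithin_le_nhds).mono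
          fun x hx => hx.le⟩
      · push_neg at ha
        exact ⟨t, ht, le_rfl, by filter_upwards [self_mem_nhdsWithin] with x hx using ha x hx⟩
    obtain ⟨b, hbI, htb, hbe⟩ := hB
    obtain ⟨a, haI, hat, hae⟩ := hA
    exact ⟨a, b, haI, hbI, hat, htb, by filter_upwards [hae, hbe] with x h1 h2 using ⟨h1, h2⟩⟩
  obtain ⟨a, b, haI, hbI, hat, htb, hev⟩ := hev
  set K : Set ℝ := Icc (min t₁ a) (max t₁ b) with hK
  have hminI : min t₁ a ∈ I := by rcases min_cases t₁ a with ⟨h, -⟩ | ⟨h, -⟩ <;> rw [h] <;>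
    assumption
  have hmaxI : max t₁ b ∈ I := by rcases max_cases t₁ b with ⟨h, -⟩ | ⟨h, -⟩ <;> rw [h] <;>
    assumption
  have hKI : K ⊆ I := conv.ordConnected.out hminI hmaxI
  have hKt₁ : t₁ ∈ K := ⟨min_le_left _ _, le_max_left _ _⟩
  have hKsub : ∀ t' : ℝ, t' ∈ Icc a b → ∀ s ∈ Icc (0:ℝ) 1, t₁ + s * (t' - t₁) ∈ K := by
    intro t' ht' s hs
    have hK' : t' ∈ K := ⟨le_trans (min_le_right _ _) ht'.1, le_trans ht'.2 (le_max_right _ _)⟩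
    have h := (convex_Icc (min t₁ a) (max t₁ b)) hKt₁ hK'
      (by linarith [hs.2] : (0:ℝ) ≤ 1 - s) hs.1 (by ring)
    have heq : (1 - s) • t₁ + s • t' = t₁ + s * (t' - t₁) := by simp [smul_eq_mul]; ring
    rwa [heq] at h
  obtain ⟨M, hM⟩ := isCompact_Icc.exists_bound_of_continuousOn (hφ'c.mono hKI)
  have hM0 : 0 ≤ M := le_trans (norm_nonneg _) (hM t₁ hKt₁)
  have hlip : ∀ x ∈ K, ∀ y ∈ K, |φ y - φ x| ≤ M * |y - x| := by
    intro x hx y hy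
    exact Convex.norm_image_sub_le_of_norm_hasDerivWithin_le
      (fun z hz => (hφd z (hKI hz)).mono hKI) (fun z hz => hM z hz) (convex_Icc _ _) hx hy
  have htK : t ∈ Icc a b := ⟨hat, htb⟩
  rw [hasDerivWithinAt_iff_tendsto_slope]
  set l : Filter ℝ := 𝓝[I \ {t}] t with hl
  have hmeml : ∀ᶠ t' in l, t' ∈ I ∧ t' ≠ t := by
    filter_upwards [self_mem_nhdsWithin] with x hx using ⟨hx.1, hx.2⟩
  have hev' : ∀ᶠ t' in l, t' ∈ Icc a b :=
    hev.filter_mono (nhdsWithin_mono t diff_subset)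
  have key : Tendsto (fun t' => ∫ s in (0:ℝ)..1,
        (t' - t)⁻¹ * (s ^ k * φ (t₁ + s * (t' - t₁)) - s ^ k * φ (t₁ + s * (t - t₁)))) l
      (𝓝 (∫ s in (0:ℝ)..1, s ^ (k+1) * φ' (t₁ + s * (t - t₁)))) := by
    apply intervalIntegral.tendsto_integral_filter_of_dominated_convergence (bound := fun _ => M)
    · -- measurability
      filter_upwards [hmeml] with t' ht'
      apply ContinuousOn.aestronglyMeasurable ?_ measurableSet_uIoc
      have : ContinuousOn (fun s : ℝ => (t' - t)⁻¹ *
          (s ^ k * φ (t₁ + s * (t' - t₁)) - s ^ k * φ (t₁ + s * (t - t₁)))) (Icc (0:ℝ) 1) :=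
        continuousOn_const.mul ((hcont k φ hφc t' ht'.1).sub (hcont k φ hφc t ht))
      apply this.mono
      rw [uIoc_of_le zero_le_one]; exact Ioc_subset_Icc_self
    · -- bound
      filter_upwards [hmeml, hev'] with t' ht' hab'
      apply ae_of_all
      intro s hs
      rw [uIoc_of_le zero_le_one] at hs
      have hs0 : 0 < s := hs.1
      have hs1 : s ≤ 1 := hs.2
      have hsI : s ∈ Icc (0:ℝ) 1 := ⟨hs0.le, hs1⟩
      have h1 : t₁ + s * (t' - t₁) ∈ K := hKsub t' hab' s hsI
      have h2 : t₁ + s * (t - t₁) ∈ K := hKsub t htK s hsI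
      have hd : |φ (t₁ + s * (t' - t₁)) - φ (t₁ + s * (t - t₁))| ≤ M * (s * |t' - t|) := by
        have := hlip _ h2 _ h1
        have heq : (t₁ + s * (t' - t₁)) - (t₁ + s * (t - t₁)) = s * (t' - t) := by ring
        rwa [heq, abs_mul, abs_of_pos hs0] at this
      have hct : 0 < |t' - t| := abs_pos.mpr (sub_ne_zero.mpr ht'.2)
      have hexp : ‖(t' - t)⁻¹ * (s ^ k * φ (t₁ + s * (t' - t₁)) - s ^ k * φ (t₁ + s * (t - t₁)))‖
          = |t' - t|⁻¹ * (s ^ k * |φ (t₁ + s * (t' - t₁)) - φ (t₁ + s * (t - t₁))|) := by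
        rw [Real.norm_eq_abs, abs_mul, abs_inv]
        congr 1
        rw [← mul_sub, abs_mul, abs_pow, abs_of_pos hs0]
      rw [hexp]
      have hsk : s ^ k ≤ 1 := pow_le_one₀ hs0.le hs1
      calc |t' - t|⁻¹ * (s ^ k * |φ (t₁ + s * (t' - t₁)) - φ (t₁ + s * (t - t₁))|)
          ≤ |t' - t|⁻¹ * (s ^ k * (M * (s * |t' - t|))) := by
            apply mul_le_mul_of_nonneg_left _ (inv_nonneg.mpr hct.le)
            exact mul_le_mul_of_nonneg_left hd (pow_nonneg hs0.le _)
        _ = (s ^ k * s * M) * (|t' - t|⁻¹ * |t' - t|) := by ring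
        _ = s ^ k * s * M := by rw [inv_mul_cancel₀ hct.ne', mul_one]
        _ ≤ 1 * 1 * M := by
            apply mul_le_mul_of_nonneg_right _ hM0
            exact mul_le_mul hsk hs1 hs0.le zero_le_one
        _ = M := by ring
    · exact intervalIntegrable_const
    · -- pointwise limit
      apply ae_of_all
      intro s hs
      rw [uIoc_of_le zero_le_one] at hs
      have hs0 : 0 < s := hs.1
      have hsI : s ∈ Icc (0:ℝ) 1 := ⟨hs0.le, hs.2⟩
      have hℓI : t₁ + s * (t - t₁) ∈ I := hmemI t ht s hsI
      have hφℓ := hφd _ hℓI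
      rw [hasDerivWithinAt_iff_tendsto_slope] at hφℓ
      have hmap : Tendsto (fun t' => t₁ + s * (t' - t₁)) l
          (𝓝[I \ {t₁ + s * (t - t₁)}] (t₁ + s * (t - t₁))) := by
        rw [tendsto_nhdsWithin_iff]
        constructor
        · apply Tendsto.mono_left _ nhdsWithin_le_nhds
          exact (continuous_const.add (continuous_const.mul
            (continuous_id.sub continuous_const))).tendsto t
        · filter_upwards [hmeml] with t' ht'
          refine ⟨hmemI t' ht'.1 s hsI, ?_⟩
          intro hcontra
          rw [Set.mem_singleton_iff] at hcontra
          apply ht'.2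
          have h0 : s * (t' - t) = 0 := by ring_nf at hcontra ⊢; linarith
          rcases mul_eq_zero.mp h0 with h | h
          · exact absurd h hs0.ne'
          · exact sub_eq_zero.mp h
      have hT := (hφℓ.comp hmap).const_mul (s ^ (k+1))
      apply hT.congr'
      filter_upwards [hmeml] with t' ht'
      have hne : t' - t ≠ 0 := sub_ne_zero.mpr ht'.2
      have hℓne : (t₁ + s * (t' - t₁)) - (t₁ + s * (t - t₁)) = s * (t' - t) := by ring
      simp only [Function.comp]
      rw [slope_def_field, hℓne]
      rw [div_eq_mul_inv, mul_inv, mul_comm (s⁻¹) ((t' - t)⁻¹)]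
      field_simp
      ring
  -- now identify slope with the integral
  apply key.congr'
  filter_upwards [hmeml] with t' ht'
  have hne : t' - t ≠ 0 := sub_ne_zero.mpr ht'.2
  rw [slope_def_field, intervalIntegral.integral_const_mul,
    intervalIntegral.integral_sub (hInt k φ hφc t' ht'.1) (hInt k φ hφc t ht), div_eq_inv_mul]


private lemma ftc_within (I : Set ℝ) (conv : Convex ℝ I)
    (φ φ' : ℝ → ℝ) (hφd : ∀ x ∈ I, HasDerivWithinAt φ (φ' x) I x)
    (hφ'c : ContinuousOn φ' I) {a b : ℝ} (ha : a ∈ I) (hb : b ∈ I) :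
    ∫ u in a..b, φ' u = φ b - φ a := by
  have hφc : ContinuousOn φ I := fun x hx => (hφd x hx).continuousWithinAt
  have main : ∀ x y : ℝ, x ∈ I → y ∈ I → x ≤ y → ∫ u in x..y, φ' u = φ y - φ x := by
    intro x y hx hy hxy
    have hIcc : Icc x y ⊆ I := conv.ordConnected.out hx hy
    apply intervalIntegral.integral_eq_sub_of_hasDeriv_right_of_le hxy (hφc.mono hIcc)
    · intro z hz
      have hzI : z ∈ I := hIcc (Ioo_subset_Icc_self hz)
      have hnhds : I ∈ 𝓝 z := mem_nhds_iff.mpr ⟨Ioo x y, fun w hw => hIcc (Ioo_subset_Icc_self hw),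
        isOpen_Ioo, hz⟩
      exact ((hφd z hzI).hasDerivAt hnhds).hasDerivWithinAt
    · apply ContinuousOn.intervalIntegrable
      rw [uIcc_of_le hxy]
      exact hφ'c.mono hIcc
  rcases le_total a b with h | h
  · exact main a b ha hb h
  · rw [intervalIntegral.integral_symm, main b a hb ha h]; ring

private lemma aux_nondeg
    (I : Set ℝ) (hI : I.OrdConnected) (f : ℝ → ℝ) (t₁ : ℝ) (ht₁ : t₁ ∈ I)
    (hf : ContDiffOn ℝ (⊤ : ℕ∞) f I)
    (hmono : ∀ k : ℕ, ∀ t ∈ I, 0 ≤ iteratedDerivWithin k f I t)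
    (g : ℝ → ℝ)
    (hg : ∀ t, g t = if t = t₁ then derivWithin f I t₁ else (f t - f t₁) / (t - t₁))
    (t₀ : ℝ) (ht₀ : t₀ ∈ I) (hne : t₀ ≠ t₁) :
    ContDiffOn ℝ (⊤ : ℕ∞) g I ∧ ∀ k : ℕ, ∀ t ∈ I, 0 ≤ iteratedDerivWithin k g I t := by
  have conv : Convex ℝ I := convex_iff_ordConnected.mpr hI
  have huni : UniqueDiffOn ℝ I := by
    apply uniqueDiffOn_convex conv
    have h1 : Ioo (min t₀ t₁) (max t₀ t₁) ⊆ interior I := by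
      rw [← interior_Icc]
      apply interior_mono
      apply conv.ordConnected.out
      · rcases min_cases t₀ t₁ with ⟨h, -⟩ | ⟨h, -⟩ <;> rw [h] <;> assumption
      · rcases max_cases t₀ t₁ with ⟨h, -⟩ | ⟨h, -⟩ <;> rw [h] <;> assumption
    have h2 : (Ioo (min t₀ t₁) (max t₀ t₁)).Nonempty := by
      apply nonempty_Ioo.mpr
      rcases lt_or_gt_of_ne hne with h | h
      · rw [min_eq_left h.le, max_eq_right h.le]; exact h
      · rw [min_eq_right h.le, max_eq_left h.le]; exact h
    exact h2.mono h1
  set F : ℕ → ℝ → ℝ := fun k => iteratedDerivWithin k f I with hF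
  have hFd : ∀ (k : ℕ), ∀ x ∈ I, HasDerivWithinAt (F k) (F (k+1) x) I x := by
    intro k x hx
    have hd : DifferentiableOn ℝ (F k) I := by
      apply hf.differentiableOn_iteratedDerivWithin _ huni
      exact_mod_cast WithTop.coe_lt_top _
    have h1 := (hd x hx).hasDerivWithinAt
    rwa [← iteratedDerivWithin_succ] at h1
  have hFc : ∀ k : ℕ, ContinuousOn (F k) I := fun k x hx => (hFd k x hx).continuousWithinAt
  have hmemI : ∀ u ∈ I, ∀ s ∈ Icc (0:ℝ) 1, t₁ + s * (u - t₁) ∈ I := by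
    intro u hu s hs
    have h := conv ht₁ hu (by linarith [hs.2] : (0:ℝ) ≤ 1 - s) hs.1 (by ring)
    have heq : (1 - s) • t₁ + s • u = t₁ + s * (u - t₁) := by simp [smul_eq_mul]; ring
    rwa [heq] at h
  set G : ℕ → ℝ → ℝ := fun k t => ∫ s in (0:ℝ)..1, s ^ k * F (k+1) (t₁ + s * (t - t₁)) with hG
  have hGd : ∀ (k : ℕ), ∀ t ∈ I, HasDerivWithinAt (G k) (G (k+1) t) I t := by
    intro k t ht
    exact key_deriv I conv t₁ ht₁ (F (k+1)) (F (k+2)) (fun x hx => hFd (k+1) x hx)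
      (hFc (k+2)) k t ht
  have hGnonneg : ∀ (k : ℕ), ∀ t ∈ I, 0 ≤ G k t := by
    intro k t ht
    apply intervalIntegral.integral_nonneg zero_le_one
    intro s hs
    exact mul_nonneg (pow_nonneg hs.1 _) (hmono (k+1) _ (hmemI t ht s hs))
  have hgG : EqOn g (G 0) I := by
    intro t ht
    by_cases h : t = t₁
    · subst h
      rw [hg, if_pos rfl]
      have : G 0 t = ∫ s in (0:ℝ)..1, F 1 t := by
        apply intervalIntegral.integral_congr
        intro s hs
        simp
      rw [this]
      simp only [intervalIntegral.integral_const, smul_eq_mul, sub_zero, one_mul]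
      show derivWithin f I t = iteratedDerivWithin 1 f I t
      rw [iteratedDerivWithin_one]
    · rw [hg, if_neg h]
      have hstep1 : G 0 t = ∫ s in (0:ℝ)..1, F 1 ((t - t₁) * s + t₁) := by
        apply intervalIntegral.integral_congr
        intro s hs
        simp only [pow_zero, one_mul]
        ring_nf
      have hne' : t - t₁ ≠ 0 := sub_ne_zero.mpr h
      rw [hstep1, intervalIntegral.integral_comp_mul_add _ hne']
      simp only [mul_zero, zero_add, mul_one, sub_add_cancel]
      have hFTC : ∫ u in t₁..t, F 1 u = f t - f t₁ := by
        have hφd : ∀ x ∈ I, HasDerivWithinAt f (F 1 x) I x := by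
          intro x hx
          have h0 := hFd 0 x hx
          simp only [hF, iteratedDerivWithin_zero] at h0
          exact h0
        exact ftc_within I conv f (F 1) hφd (hFc 1) ht₁ ht
      rw [hFTC, smul_eq_mul, div_eq_inv_mul]
  have hiter : ∀ (k : ℕ), ∀ t ∈ I, iteratedDerivWithin k g I t = G k t := by
    intro k
    induction k with
    | zero => intro t ht; rw [iteratedDerivWithin_zero]; exact hgG ht
    | succ k ih =>
      intro t ht
      rw [iteratedDerivWithin_succ,
        derivWithin_congr (fun x hx => ih x hx) (ih t ht),
        (hGd k t ht).derivWithin (huni t ht)]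
  constructor
  · -- smoothness via the derivative chain of G
    have hGc : ∀ n : ℕ, ∀ k : ℕ, ContDiffOn ℝ n (G k) I := by
      intro n
      induction n with
      | zero =>
        intro k
        rw [Nat.cast_zero, contDiffOn_zero]
        exact fun x hx => (hGd k x hx).continuousWithinAt
      | succ n ih =>
        intro k
        have hcast : ((n + 1 : ℕ) : WithTop ℕ∞) = (n : WithTop ℕ∞) + 1 := by push_cast; rfl
        rw [hcast, contDiffOn_succ_iff_derivWithin huni]
        refine ⟨fun x hx => (hGd k x hx).differentiableWithinAt, by simp, ?_⟩
        exact (ih (k+1)).congr (fun x hx => (hGd k x hx).derivWithin (huni x hx))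
    have hGinf : ContDiffOn ℝ (⊤ : ℕ∞) (G 0) I := contDiffOn_infty.mpr (fun n => hGc n 0)
    exact hGinf.congr (fun x hx => hgG hx)
  · intro k t ht
    rw [hiter k t ht]
    exact hGnonneg k t ht

/-- if `f` is smooth and absolutely monotonic on an interval `I` and `t₁ ∈ I`,
then the divided difference `g(t) = (f t - f t₁)/(t - t₁)` (with `g t₁ = f' t₁`)
is absolutely monotonic on `I`. -/
theorem divided_difference_absolutely_monotonic
    (I : Set ℝ) (hI : I.OrdConnected) (f : ℝ → ℝ) (t₁ : ℝ) (ht₁ : t₁ ∈ I)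
    (hf : ContDiffOn ℝ (⊤ : ℕ∞) f I)
    (hmono : ∀ k : ℕ, ∀ t ∈ I, 0 ≤ iteratedDerivWithin k f I t)
    (g : ℝ → ℝ)
    (hg : ∀ t, g t = if t = t₁ then derivWithin f I t₁ else (f t - f t₁) / (t - t₁)) :
    ContDiffOn ℝ (⊤ : ℕ∞) g I ∧ ∀ k : ℕ, ∀ t ∈ I, 0 ≤ iteratedDerivWithin k g I t := by
  by_cases hdeg : ∀ x ∈ I, x = t₁
  · have hisol : 𝓝[I \ {t₁}] t₁ = ⊥ := by
      have hempty : I \ {t₁} = ∅ := by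
        ext x
        simp only [Set.mem_diff, Set.mem_singleton_iff, Set.mem_empty_iff_false, iff_false,
          not_and, not_not]
        exact fun hx => hdeg x hx
      rw [hempty, nhdsWithin_empty]
    constructor
    · exact contDiffOn_const.congr (fun x hx => by rw [hdeg x hx])
    · intro k t ht
      have ht' := hdeg t ht
      subst ht'
      cases k with
      | zero =>
        simp only [iteratedDerivWithin_zero]
        rw [hg, if_pos rfl, derivWithin_zero_of_not_accPt (fun h => (accPt_principal_iff_nhdsWithin.mp h).ne hisol)]
      | succ k =>
        rw [iteratedDerivWithin_eq_iteratedFDerivWithin, iteratedFDerivWithin_succ_apply_left,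
          fderivWithin_zero_of_not_accPt (fun h => (accPt_principal_iff_nhdsWithin.mp h).ne hisol)]
        simp
  · push_neg at hdeg
    obtain ⟨t₀, ht₀, hne⟩ := hdeg
    exact aux_nondeg I hI f t₁ ht₁ hf hmono g hg t₀ ht₀ hne

-- #print axioms divided_difference_absolutely_monotonic
end

section
/- For every smooth absolutely monotonic function f on an interval I, and every t₁ ∈ I and k ≥ 0, the identity d^k/dt^k [(f(t)-f(t₁))/(t-t₁)] = (∫_{t₁}^t f^(k+1)(u)(u-t₁)^k du)/(t-t₁)^{k+1} holds for t ∈ I with t ≠ t₁. -/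
open intervalIntegral Set MeasureTheory Topology Filter Classical

/-- Localized FTC-1: the integral of a function continuous on an order-connected set
has the expected derivative within the set. -/
lemma aux_hasDerivWithinAt_integral (I : Set ℝ) (hI : I.OrdConnected) (h : ℝ → ℝ)
    (hc : ContinuousOn h I) (t₁ t : ℝ) (ht₁ : t₁ ∈ I) (ht : t ∈ I) :
    HasDerivWithinAt (fun s => ∫ u in t₁..s, h u) (h t) I t := by
  classical
  set c : ℝ := if hb' : ∃ q ∈ I, q < t then hb'.choose else t with hc_def
  set d : ℝ := if ha' : ∃ p ∈ I, t < p then ha'.choose else t with hd_def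
  have hcI : c ∈ I := by
    rw [hc_def]; split
    · next h' => exact h'.choose_spec.1
    · exact ht
  have hdI : d ∈ I := by
    rw [hd_def]; split
    · next h' => exact h'.choose_spec.1
    · exact ht
  have hct : c ≤ t := by
    rw [hc_def]; split
    · next h' => exact h'.choose_spec.2.le
    · exact le_rfl
  have htd : t ≤ d := by
    rw [hd_def]; split
    · next h' => exact h'.choose_spec.2.le
    · exact le_rfl
  have hsub : Icc c d ⊆ I := hI.out hcI hdI
  have htcd : t ∈ Icc c d := ⟨hct, htd⟩
  have hmem : Icc c d ∈ 𝓝[I] t := by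
    have h1 : ∀ᶠ s in 𝓝[I] t, c ≤ s := by
      by_cases hb' : ∃ q ∈ I, q < t
      · have hclt : c < t := by rw [hc_def, dif_pos hb']; exact hb'.choose_spec.2
        exact eventually_nhdsWithin_of_eventually_nhds
          ((eventually_gt_nhds hclt).mono fun s hs => hs.le)
      · refine eventually_mem_nhdsWithin.mono fun s hs => ?_
        rw [hc_def, dif_neg hb']
        exact le_of_not_gt fun hlt => hb' ⟨s, hs, hlt⟩
    have h2 : ∀ᶠ s in 𝓝[I] t, s ≤ d := by
      by_cases ha' : ∃ p ∈ I, t < p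
      · have hlt : t < d := by rw [hd_def, dif_pos ha']; exact ha'.choose_spec.2
        exact eventually_nhdsWithin_of_eventually_nhds
          ((eventually_lt_nhds hlt).mono fun s hs => hs.le)
      · refine eventually_mem_nhdsWithin.mono fun s hs => ?_
        rw [hd_def, dif_neg ha']
        exact le_of_not_gt fun hlt => ha' ⟨s, hs, hlt⟩
    filter_upwards [h1, h2] with s hs1 hs2 using ⟨hs1, hs2⟩
  haveI : Fact (t ∈ Icc c d) := ⟨htcd⟩
  have hint : IntervalIntegrable h volume t₁ t :=
    (hc.mono (hI.uIcc_subset ht₁ ht)).intervalIntegrable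
  have hmeas : StronglyMeasurableAtFilter h (𝓝[Icc c d] t) volume :=
    (hc.mono hsub).stronglyMeasurableAtFilter_nhdsWithin measurableSet_Icc t
  have hcw : ContinuousWithinAt h (Icc c d) t := (hc.mono hsub) t htcd
  exact (intervalIntegral.integral_hasDerivWithinAt_right hint hmeas
    hcw).mono_of_mem_nhdsWithin hmem

/-- the identity
`d^k/dt^k [(f(t)-f(t₁))/(t-t₁)] = (∫_{t₁}^t f^(k+1)(u)(u-t₁)^k du)/(t-t₁)^{k+1}`
for smooth absolutely monotonic `f` on an interval `I`, `t ∈ I`, `t ≠ t₁`. -/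
theorem divided_difference_deriv_formula
    (I : Set ℝ) (hI : I.OrdConnected) (f : ℝ → ℝ) (t₁ : ℝ) (ht₁ : t₁ ∈ I)
    (hf : ContDiffOn ℝ (⊤ : ℕ∞) f I)
    (hmono : ∀ k : ℕ, ∀ s ∈ I, 0 ≤ iteratedDerivWithin k f I s)
    (k : ℕ) (t : ℝ) (ht : t ∈ I) (hne : t ≠ t₁) :
    iteratedDerivWithin k (fun s => (f s - f t₁) / (s - t₁)) I t =
      (∫ u in t₁..t, iteratedDerivWithin (k + 1) f I u * (u - t₁) ^ k) /
        (t - t₁) ^ (k + 1) := by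
  have hconv : Convex ℝ I := convex_iff_ordConnected.mpr hI
  have hIcc : Set.uIcc t₁ t ⊆ I := hI.uIcc_subset ht₁ ht
  have hlt : min t₁ t < max t₁ t := min_lt_max.mpr (Ne.symm hne)
  have hUD : UniqueDiffOn ℝ I := by
    refine uniqueDiffOn_convex hconv ⟨(min t₁ t + max t₁ t) / 2, ?_⟩
    have : Ioo (min t₁ t) (max t₁ t) ⊆ interior I := by
      rw [← interior_Icc]
      exact interior_mono (by rw [← Set.uIcc] at *; exact hIcc)
    exact this ⟨by linarith, by linarith⟩
  set F : ℕ → ℝ → ℝ := fun m => iteratedDerivWithin m f I with hF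
  have hcont : ∀ m, ContinuousOn (F m) I :=
    fun m => hf.continuousOn_iteratedDerivWithin (by exact_mod_cast le_top) hUD
  have hderivW : ∀ m, ∀ x ∈ I, HasDerivWithinAt (F m) (F (m + 1) x) I x := by
    intro m x hx
    have hm : (m : WithTop ℕ∞) < ((⊤ : ℕ∞) : WithTop ℕ∞) := by exact_mod_cast ENat.coe_lt_top m
    have hd : DifferentiableWithinAt ℝ (F m) I x :=
      (hf.differentiableOn_iteratedDerivWithin hm hUD) x hx
    have := hd.hasDerivWithinAt
    rwa [show derivWithin (F m) I x = F (m + 1) x from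
      (congrFun iteratedDerivWithin_succ x).symm] at this
  have hderivAt : ∀ m, ∀ x ∈ interior I, HasDerivAt (F m) (F (m + 1) x) x := by
    intro m x hx
    exact (hderivW m x (interior_subset hx)).hasDerivAt (mem_interior_iff_mem_nhds.mp hx)
  have hIoo_sub : ∀ s ∈ I, Ioo (min t₁ s) (max t₁ s) ⊆ interior I := by
    intro s hs
    rw [← interior_Icc]
    exact interior_mono (by rw [← Set.uIcc]; exact hI.uIcc_subset ht₁ hs)
  have hII : ∀ (m p : ℕ) (s : ℝ), s ∈ I →
      IntervalIntegrable (fun u => F m u * (u - t₁) ^ p) volume t₁ s := by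
    intro m p s hs
    exact (((hcont m).mono (hI.uIcc_subset ht₁ hs)).mul
      (Continuous.continuousOn (by continuity))).intervalIntegrable
  -- FTC base identity
  have hA : ∀ s ∈ I, (∫ u in t₁..s, F 1 u) = f s - f t₁ := by
    intro s hs
    have : (∫ u in t₁..s, F 1 u) = F 0 s - F 0 t₁ := by
      apply intervalIntegral.integral_eq_sub_of_hasDeriv_right
      · exact (hcont 0).mono (hI.uIcc_subset ht₁ hs)
      · exact fun x hx => ((hderivAt 0 x (hIoo_sub s hs hx)).hasDerivWithinAt)
      · have := hII 1 0 s hs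
        simpa using this
    simpa [hF, iteratedDerivWithin_zero] using this
  -- integration by parts identity
  have hB : ∀ (m : ℕ) (s : ℝ), s ∈ I →
      (∫ u in t₁..s, (F (m + 2) u * (u - t₁) ^ (m + 1) +
        ((m : ℝ) + 1) * (F (m + 1) u * (u - t₁) ^ m))) =
      F (m + 1) s * (s - t₁) ^ (m + 1) := by
    intro m s hs
    have key : (∫ u in t₁..s, (F (m + 2) u * (u - t₁) ^ (m + 1) +
        ((m : ℝ) + 1) * (F (m + 1) u * (u - t₁) ^ m))) =
        (fun u => F (m + 1) u * (u - t₁) ^ (m + 1)) s -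
        (fun u => F (m + 1) u * (u - t₁) ^ (m + 1)) t₁ := by
      apply intervalIntegral.integral_eq_sub_of_hasDeriv_right
      · exact (((hcont (m + 1)).mono (hI.uIcc_subset ht₁ hs)).mul
          (Continuous.continuousOn (by continuity)))
      · intro x hx
        have h1 : HasDerivAt (F (m + 1)) (F (m + 2) x) x := hderivAt (m + 1) x (hIoo_sub s hs hx)
        have h2 : HasDerivAt (fun u : ℝ => (u - t₁) ^ (m + 1))
            (((m : ℝ) + 1) * (x - t₁) ^ m) x := by
          have := ((hasDerivAt_id x).sub_const t₁).fun_pow (m + 1)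
          simpa [mul_comm, Nat.cast_add] using this
        have := h1.fun_mul h2
        refine (HasDerivAt.hasDerivWithinAt (by convert this using 1; rfl; ring))
      · exact ((hII (m + 2) (m + 1) s hs).add ((hII (m + 1) m s hs).const_mul _))
    rw [key]
    simp
  clear hmono hIcc hlt hconv hf
  induction k generalizing t with
  | zero =>
    simp only [iteratedDerivWithin_zero, zero_add, pow_zero, mul_one, pow_one]
    rw [show (∫ u in t₁..t, iteratedDerivWithin 1 f I u) = f t - f t₁ from hA t ht]
  | succ k ih =>
    set N : ℝ → ℝ := fun s => ∫ u in t₁..s, F (k + 1) u * (u - t₁) ^ k with hN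
    set R : ℝ → ℝ := fun s => N s / (s - t₁) ^ (k + 1) with hR
    have heq : iteratedDerivWithin (k + 1) (fun s => (f s - f t₁) / (s - t₁)) I t =
        derivWithin R I t := by
      rw [iteratedDerivWithin_succ]
      apply Filter.EventuallyEq.derivWithin_eq
      · have hne' : ∀ᶠ s in 𝓝[I] t, s ≠ t₁ :=
          eventually_nhdsWithin_of_eventually_nhds (eventually_ne_nhds hne)
        filter_upwards [eventually_mem_nhdsWithin, hne'] with s hs hsne
        exact ih s hs hsne
      · exact ih t ht hne
    rw [heq]
    have hne0 : (t - t₁) ≠ 0 := sub_ne_zero.mpr hne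
    have hNd : HasDerivWithinAt N (F (k + 1) t * (t - t₁) ^ k) I t :=
      aux_hasDerivWithinAt_integral I hI (fun u => F (k + 1) u * (u - t₁) ^ k)
        ((hcont (k + 1)).mul (Continuous.continuousOn (by continuity))) t₁ t ht₁ ht
    have hDd : HasDerivWithinAt (fun s : ℝ => (s - t₁) ^ (k + 1))
        (((k : ℝ) + 1) * (t - t₁) ^ k) I t := by
      have := (((hasDerivAt_id t).sub_const t₁).fun_pow (k + 1)).hasDerivWithinAt (s := I)
      simpa [mul_comm, Nat.cast_add] using this
    have hRd := hNd.fun_div hDd (pow_ne_zero _ hne0)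
    rw [hRd.derivWithin (hUD t ht)]
    have hBt := hB k t ht
    have hsplit : (∫ u in t₁..t, (F (k + 2) u * (u - t₁) ^ (k + 1) +
        ((k : ℝ) + 1) * (F (k + 1) u * (u - t₁) ^ k))) =
        (∫ u in t₁..t, F (k + 2) u * (u - t₁) ^ (k + 1)) + ((k : ℝ) + 1) * N t := by
      rw [intervalIntegral.integral_add (hII (k + 2) (k + 1) t ht)
        ((hII (k + 1) k t ht).const_mul _), intervalIntegral.integral_const_mul]
    rw [hsplit] at hBt
    have hNew : (∫ u in t₁..t, F (k + 2) u * (u - t₁) ^ (k + 1)) =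
        F (k + 1) t * (t - t₁) ^ (k + 1) - ((k : ℝ) + 1) * N t := by linarith
    show (F (k + 1) t * (t - t₁) ^ k * (t - t₁) ^ (k + 1) -
        N t * (((k : ℝ) + 1) * (t - t₁) ^ k)) / ((t - t₁) ^ (k + 1)) ^ 2 =
        (∫ u in t₁..t, F (k + 1 + 1) u * (u - t₁) ^ (k + 1)) / (t - t₁) ^ (k + 1 + 1)
    rw [show k + 1 + 1 = k + 2 from rfl, hNew]
    field_simp
    ring
end

section
/- Any antipodal code in S^{n-1} (a set of N unit vectors closed under x ↦ −x) with N/2 > n(n+1)/2 must have some pair of non-antipodal, non-equal points x, y with |⟨x,y⟩| ≥ 1/√n. -/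
open scoped RealInnerProductSpace
open Finset Module

section NegInner

variable {V : Type*} [NormedAddCommGroup V] [InnerProductSpace ℝ V]

/-- In a finite-dimensional real inner product space, a finite set of vectors with pairwise
negative inner products has at most `finrank + 1` elements. -/
lemma card_le_of_pairwise_neg_inner [FiniteDimensional ℝ V] (T : Finset V)
    (h : ∀ s ∈ T, ∀ t ∈ T, s ≠ t → ⟪s, t⟫ < 0) :
    T.card ≤ finrank ℝ V + 1 := by
  classical
  rcases T.eq_empty_or_nonempty with rfl | ⟨t0, ht0⟩
  · simp
  set E := T.erase t0 with hE
  have hcardT : T.card = E.card + 1 := by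
    rw [hE, Finset.card_erase_of_mem ht0]
    have : 1 ≤ T.card := Finset.card_pos.mpr ⟨t0, ht0⟩
    omega
  have hErT : E ⊆ T := Finset.erase_subset _ _
  have hne : ∀ t ∈ E, t ≠ t0 := fun t ht => Finset.ne_of_mem_erase ht
  have hind : LinearIndependent ℝ (fun x : E => (x : V)) := by
    rw [Fintype.linearIndependent_iff]
    intro g hg
    set a : V → ℝ := fun t => if h : t ∈ E then g ⟨t, h⟩ else 0 with ha
    have hsum : ∑ t ∈ E, a t • t = 0 := by
      rw [← Finset.sum_attach E (fun t => a t • t), ← hg]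
      refine Finset.sum_congr (by rw [Finset.univ_eq_attach]) fun i _ => ?_
      simp [ha, i.2]
    set P := E.filter (fun t => 0 < a t) with hP
    set Q := E.filter (fun t => ¬ 0 < a t) with hQ
    have hPQ : ∑ t ∈ P, a t • t + ∑ t ∈ Q, a t • t = 0 := by
      rw [hP, hQ, Finset.sum_filter_add_sum_filter_not]; exact hsum
    set u : V := ∑ t ∈ P, a t • t with hu
    have huQ : u = ∑ t ∈ Q, (-a t) • t := by
      have h1 : u = -∑ t ∈ Q, a t • t := eq_neg_of_add_eq_zero_left hPQ
      rw [h1, ← Finset.sum_neg_distrib]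
      exact Finset.sum_congr rfl fun t _ => (neg_smul _ _).symm
    have hinner : ⟪u, u⟫ = ∑ s ∈ P, ∑ t ∈ Q, (a s * (-a t)) * ⟪s, t⟫ := by
      nth_rewrite 2 [huQ]
      nth_rewrite 1 [hu]
      rw [sum_inner]
      refine Finset.sum_congr rfl fun s hs => ?_
      rw [real_inner_smul_left, inner_sum, Finset.mul_sum]
      refine Finset.sum_congr rfl fun t ht => ?_
      rw [real_inner_smul_right]; ring
    have hPmemT : ∀ s ∈ P, s ∈ T := fun s hs => hErT (Finset.mem_filter.mp hs).1
    have hQmemT : ∀ t ∈ Q, t ∈ T := fun t ht => hErT (Finset.mem_filter.mp ht).1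
    have hQa : ∀ t ∈ Q, a t ≤ 0 := fun t ht => le_of_not_gt (Finset.mem_filter.mp ht).2
    have hPa : ∀ s ∈ P, 0 < a s := fun s hs => (Finset.mem_filter.mp hs).2
    have hu0 : u = 0 := by
      have hle : ⟪u, u⟫ ≤ 0 := by
        rw [hinner]
        refine Finset.sum_nonpos fun s hs => Finset.sum_nonpos fun t ht => ?_
        have hst : s ≠ t := by
          rintro rfl
          exact (Finset.mem_filter.mp ht).2 (hPa s hs)
        have h1 : ⟪s, t⟫ < 0 := h s (hPmemT s hs) t (hQmemT t ht) hst
        have h2 : 0 ≤ a s * (-a t) :=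
          mul_nonneg (hPa s hs).le (by linarith [hQa t ht])
        exact mul_nonpos_of_nonneg_of_nonpos h2 h1.le
      exact inner_self_eq_zero.mp (le_antisymm hle real_inner_self_nonneg)
    have hP0 : ∀ s ∈ P, False := by
      have h0 : ∑ s ∈ P, a s * ⟪s, t0⟫ = 0 := by
        have : ⟪u, t0⟫ = (0 : ℝ) := by rw [hu0, inner_zero_left]
        rw [hu, sum_inner] at this
        rw [← this]
        exact Finset.sum_congr rfl fun s _ => (real_inner_smul_left _ _ _).symm
      intro s hs
      have key := (Finset.sum_eq_zero_iff_of_nonpos ?hnp).mp h0 s hs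
      case hnp =>
        intro s hs
        have h1 : ⟪s, t0⟫ < 0 := h s (hPmemT s hs) t0 ht0 (hne s (Finset.mem_filter.mp hs).1)
        exact (mul_neg_of_pos_of_neg (hPa s hs) h1).le
      have h1 : ⟪s, t0⟫ < 0 := h s (hPmemT s hs) t0 ht0 (hne s (Finset.mem_filter.mp hs).1)
      exact absurd key (mul_neg_of_pos_of_neg (hPa s hs) h1).ne
    have hQ0 : ∀ t ∈ Q, a t = 0 := by
      have h0 : ∑ t ∈ Q, (-a t) * ⟪t, t0⟫ = 0 := by
        have : ⟪u, t0⟫ = (0 : ℝ) := by rw [hu0, inner_zero_left]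
        rw [huQ, sum_inner] at this
        rw [← this]
        exact Finset.sum_congr rfl fun t _ => (real_inner_smul_left _ _ _).symm
      intro t ht
      have key := (Finset.sum_eq_zero_iff_of_nonpos ?hnp2).mp h0 t ht
      case hnp2 =>
        intro t ht
        have h1 : ⟪t, t0⟫ < 0 := h t (hQmemT t ht) t0 ht0 (hne t (Finset.mem_filter.mp ht).1)
        exact mul_nonpos_of_nonneg_of_nonpos (by linarith [hQa t ht]) h1.le
      have h1 : ⟪t, t0⟫ < 0 := h t (hQmemT t ht) t0 ht0 (hne t (Finset.mem_filter.mp ht).1)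
      have : -a t = 0 := by
        rcases mul_eq_zero.mp key with h2 | h2
        · exact h2
        · exact absurd h2 h1.ne
      linarith
    intro i
    have hiE : (i : V) ∈ E := i.2
    have hai : a i = 0 := by
      by_cases hpos : 0 < a (i : V)
      · exact absurd trivial (fun _ => hP0 _ (Finset.mem_filter.mpr ⟨hiE, hpos⟩))
      · exact hQ0 _ (Finset.mem_filter.mpr ⟨hiE, hpos⟩)
    rw [ha] at hai
    simpa [i.2] using hai
  have := hind.finset_card_le_finrank
  omega

end NegInner

open scoped RealInnerProductSpace
open Finset Module

section Psi

variable {n : ℕ}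

lemma euc_inner {ι : Type*} [Fintype ι] (f g : EuclideanSpace ℝ ι) :
    ⟪f, g⟫ = ∑ i, f i * g i := by
  simp [PiLp.inner_apply, RCLike.inner_apply, mul_comm]

/-- The feature map `x ↦ xxᵀ` with coordinates indexed by `Sym2 (Fin n)`,
off-diagonal entries scaled by `√2`. -/
noncomputable def psiFun (x : EuclideanSpace ℝ (Fin n)) : EuclideanSpace ℝ (Sym2 (Fin n)) :=
  WithLp.toLp 2 fun s => Sym2.lift ⟨fun i j => (if i = j then 1 else Real.sqrt 2) * (x i * x j), by
    intro i j
    rcases eq_or_ne i j with rfl | hij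
    · rfl
    · simp only [if_neg hij, if_neg hij.symm]; ring⟩ s

lemma psiFun_mk (x : EuclideanSpace ℝ (Fin n)) (i j : Fin n) :
    psiFun x s(i, j) = (if i = j then 1 else Real.sqrt 2) * (x i * x j) := rfl

lemma psiFun_neg (x : EuclideanSpace ℝ (Fin n)) : psiFun (-x) = psiFun x := by
  ext s
  induction s using Sym2.ind with
  | _ i j =>
    have h1 : (-x) i = -(x i) := rfl
    have h2 : (-x) j = -(x j) := rfl
    rw [psiFun_mk, psiFun_mk, h1, h2]; ring

/-- The symmetrized product function. -/
noncomputable def phiFun (x y : EuclideanSpace ℝ (Fin n)) : Sym2 (Fin n) → ℝ :=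
  Sym2.lift ⟨fun i j => (x i * y i) * (x j * y j), by intro i j; ring⟩

lemma fiber_card (s : Sym2 (Fin n)) :
    ({p ∈ (univ : Finset (Fin n × Fin n)) | Sym2.mk.uncurry p = s}).card
      = if s.IsDiag then 1 else 2 := by
  induction s using Sym2.ind with
  | _ i j =>
    rcases eq_or_ne i j with rfl | hij
    · rw [if_pos (Sym2.mk_isDiag_iff.mpr rfl)]
      have : {p ∈ (univ : Finset (Fin n × Fin n)) | Sym2.mk.uncurry p = s(i, i)} = {(i, i)} := by
        ext ⟨a, b⟩
        simp [Sym2.eq_iff]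
      rw [this, Finset.card_singleton]
    · rw [if_neg (fun h => hij (Sym2.mk_isDiag_iff.mp h))]
      have : {p ∈ (univ : Finset (Fin n × Fin n)) | Sym2.mk.uncurry p = s(i, j)} = {(i, j), (j, i)} := by
        ext ⟨a, b⟩
        simp [Sym2.eq_iff, Prod.ext_iff]
      rw [this, Finset.card_insert_of_notMem, Finset.card_singleton]
      simp [Prod.ext_iff]
      exact fun h => absurd h hij

lemma psi_inner (x y : EuclideanSpace ℝ (Fin n)) :
    ⟪psiFun x, psiFun y⟫ = (∑ i, x i * y i) ^ 2 := by
  classical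
  rw [euc_inner]
  have hpt : ∀ s : Sym2 (Fin n), psiFun x s * psiFun y s
      = (({p ∈ (univ : Finset (Fin n × Fin n)) | Sym2.mk.uncurry p = s}).card : ℝ) * phiFun x y s := by
    intro s
    induction s using Sym2.ind with
    | _ i j =>
      rw [fiber_card, psiFun_mk, psiFun_mk]
      have hphi : phiFun x y s(i, j) = (x i * y i) * (x j * y j) := rfl
      rcases eq_or_ne i j with rfl | hij
      · simp [hphi, Sym2.mk_isDiag_iff]; ring
      · rw [if_neg hij, if_neg (fun h => hij (Sym2.mk_isDiag_iff.mp h)), hphi]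
        have h2 : Real.sqrt 2 * Real.sqrt 2 = 2 := Real.mul_self_sqrt (by norm_num)
        push_cast
        linear_combination (x i * x j * (y i * y j)) * h2
  have hcomp := Finset.sum_comp (s := (univ : Finset (Fin n × Fin n))) (phiFun x y) Sym2.mk.uncurry
  have himg : (univ : Finset (Fin n × Fin n)).image Sym2.mk.uncurry = univ :=
    Finset.image_univ_of_surjective (fun s => Sym2.ind (fun i j => ⟨(i, j), rfl⟩) s)
  rw [himg] at hcomp
  calc ∑ s : Sym2 (Fin n), psiFun x s * psiFun y s
      = ∑ s : Sym2 (Fin n),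
          (({p ∈ (univ : Finset (Fin n × Fin n)) | Sym2.mk.uncurry p = s}).card : ℝ) * phiFun x y s :=
        Finset.sum_congr rfl fun s _ => hpt s
    _ = ∑ p : Fin n × Fin n, phiFun x y (Sym2.mk.uncurry p) := by
        rw [hcomp]
        exact Finset.sum_congr rfl fun s _ => by rw [nsmul_eq_mul]
    _ = ∑ p : Fin n × Fin n, (x p.1 * y p.1) * (x p.2 * y p.2) := rfl
    _ = (∑ i, x i * y i) ^ 2 := by
        rw [sq, Finset.sum_mul_sum, ← Finset.sum_product']
        rfl

/-- The (unnormalized) identity direction. -/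
noncomputable def eVec (n : ℕ) : EuclideanSpace ℝ (Sym2 (Fin n)) :=
  WithLp.toLp 2 fun s : Sym2 (Fin n) => if s.IsDiag then (1 : ℝ) else 0

lemma diag_filter :
    ({s ∈ (univ : Finset (Sym2 (Fin n))) | s.IsDiag}) = univ.image Sym2.diag := by
  ext s
  have hd : ∀ z : Sym2 (Fin n), z.IsDiag ↔ z ∈ Set.range Sym2.diag := fun z => by
    rw [Sym2.range_diag]; rfl
  simp [hd, -Sym2.range_diag, Set.mem_range, eq_comm]

lemma inner_psi_e (x : EuclideanSpace ℝ (Fin n)) :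
    ⟪psiFun x, eVec n⟫ = ∑ i, x i * x i := by
  classical
  rw [euc_inner]
  have : ∀ s : Sym2 (Fin n), psiFun x s * eVec n s = if s.IsDiag then psiFun x s else 0 := by
    intro s; unfold eVec; simp only [PiLp.toLp_apply]; split <;> simp
  rw [Finset.sum_congr rfl fun s _ => this s, Finset.sum_ite, Finset.sum_const, smul_zero,
    add_zero, diag_filter, Finset.sum_image (fun a _ b _ h => Sym2.diag_injective h)]
  refine Finset.sum_congr rfl fun i _ => ?_
  have : Sym2.diag i = s(i, i) := rfl
  rw [this, psiFun_mk, if_pos rfl, one_mul]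

lemma inner_e_psi (x : EuclideanSpace ℝ (Fin n)) :
    ⟪eVec n, psiFun x⟫ = ∑ i, x i * x i := by
  rw [real_inner_comm]; exact inner_psi_e x

lemma inner_e_e : ⟪eVec n, eVec n⟫ = (n : ℝ) := by
  classical
  rw [euc_inner]
  have : ∀ s : Sym2 (Fin n), eVec n s * eVec n s = if s.IsDiag then 1 else 0 := by
    intro s; unfold eVec; simp only [PiLp.toLp_apply]; split <;> simp
  rw [Finset.sum_congr rfl fun s _ => this s, Finset.sum_ite, Finset.sum_const,
    Finset.sum_const, smul_zero, add_zero, diag_filter,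
    Finset.card_image_of_injective _ Sym2.diag_injective]
  simp

lemma eq_or_eq_neg_of_prod_eq {x y : EuclideanSpace ℝ (Fin n)} (hx : ‖x‖ = 1)
    (h : ∀ i j, x i * x j = y i * y j) : x = y ∨ x = -y := by
  have hx0 : ∃ i, x i ≠ 0 := by
    by_contra h'
    push_neg at h'
    have hx0 : x = 0 := PiLp.ext h'
    rw [hx0, norm_zero] at hx
    norm_num at hx
  obtain ⟨i, hi⟩ := hx0
  rcases mul_self_eq_mul_self_iff.mp (h i i) with hyi | hyi
  · left
    ext j
    have := h i j
    rw [← hyi] at this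
    exact mul_left_cancel₀ hi this
  · right
    ext j
    have := h i j
    rw [← neg_neg (y i), ← hyi] at this
    have h2 : x i * x j = x i * (-(y j)) := by rw [this]; ring
    have := mul_left_cancel₀ hi h2
    rw [this]; rfl





end Psi

/-- orthoplex bound: any antipodal code in `S^{n-1}` with more than
`n(n+1)` points has a pair of distinct non-antipodal points with `|⟨x,y⟩| ≥ 1/√n`. -/
theorem orthoplex_bound_antipodal
    (n : ℕ) (hn : 0 < n) (C : Finset (EuclideanSpace ℝ (Fin n)))
    (hunit : ∀ x ∈ C, ‖x‖ = 1) (hanti : ∀ x ∈ C, -x ∈ C)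
    (hcard : n * (n + 1) < C.card) :
    ∃ x ∈ C, ∃ y ∈ C, x ≠ y ∧ x ≠ -y ∧ 1 / Real.sqrt n ≤ |⟪x, y⟫| := by
  classical
  by_contra hcon
  push_neg at hcon
  have hn' : (0 : ℝ) < n := by exact_mod_cast hn
  have he0 : eVec n ≠ 0 := by
    intro h
    have h2 := inner_e_e (n := n)
    rw [h, inner_zero_left] at h2
    exact hn'.ne h2
  set W : Submodule ℝ (EuclideanSpace ℝ (Sym2 (Fin n))) := (ℝ ∙ (eVec n))ᗮ with hW
  have hmem : ∀ x : EuclideanSpace ℝ (Fin n),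
      psiFun x - ((∑ i, x i * x i) / n) • eVec n ∈ W := by
    intro x
    rw [hW, Submodule.mem_orthogonal_singleton_iff_inner_right, inner_sub_right,
      real_inner_smul_right, inner_e_psi, inner_e_e]
    field_simp
    ring
  set wmap : EuclideanSpace ℝ (Fin n) → W :=
    fun x => ⟨psiFun x - ((∑ i, x i * x i) / n) • eVec n, hmem x⟩ with hwmap
  have hsq : ∀ x ∈ C, (∑ i, x i * x i) = (1 : ℝ) := by
    intro x hx
    rw [← euc_inner, real_inner_self_eq_norm_mul_norm, hunit x hx, one_mul]
  have hwneg : ∀ x : EuclideanSpace ℝ (Fin n), wmap (-x) = wmap x := by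
    intro x
    apply Subtype.ext
    show psiFun (-x) - ((∑ i, (-x) i * (-x) i) / n) • eVec n
        = psiFun x - ((∑ i, x i * x i) / n) • eVec n
    have hsum2 : (∑ i, (-x) i * (-x) i) = ∑ i, x i * x i :=
      Finset.sum_congr rfl fun i _ => by simp
    rw [psiFun_neg, hsum2]
  have hwinner : ∀ x ∈ C, ∀ y ∈ C,
      ⟪wmap x, wmap y⟫ = (∑ i, x i * y i) ^ 2 - 1 / n := by
    intro x hx y hy
    rw [Submodule.coe_inner]
    show ⟪psiFun x - ((∑ i, x i * x i) / n) • eVec n,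
        psiFun y - ((∑ i, y i * y i) / n) • eVec n⟫ = _
    simp only [inner_sub_left, inner_sub_right, real_inner_smul_left, real_inner_smul_right,
      psi_inner, inner_psi_e, inner_e_psi, inner_e_e, hsq x hx, hsq y hy]
    field_simp
    ring
  set T : Finset W := C.image wmap with hT
  have hTneg : ∀ s ∈ T, ∀ t ∈ T, s ≠ t → ⟪s, t⟫ < 0 := by
    intro s hs t ht hst
    obtain ⟨x, hx, rfl⟩ := Finset.mem_image.mp hs
    obtain ⟨y, hy, rfl⟩ := Finset.mem_image.mp ht
    have hxy : x ≠ y := fun h => hst (by rw [h])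
    have hxny : x ≠ -y := fun h => hst (by rw [h, hwneg])
    have habs := hcon x hx y hy hxy hxny
    have hip : (∑ i, x i * y i) = ⟪x, y⟫ := (euc_inner x y).symm
    rw [hwinner x hx y hy, hip]
    have h1 : |⟪x, y⟫| ^ 2 < (1 / Real.sqrt n) ^ 2 :=
      pow_lt_pow_left₀ habs (abs_nonneg _) two_ne_zero
    rw [sq_abs, div_pow, one_pow, Real.sq_sqrt hn'.le] at h1
    linarith
  have h1 : T.card ≤ finrank ℝ W + 1 := card_le_of_pairwise_neg_inner T hTneg
  have hfr : finrank ℝ (ℝ ∙ eVec n) + finrank ℝ W = Fintype.card (Sym2 (Fin n)) := by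
    rw [hW, Submodule.finrank_add_finrank_orthogonal, finrank_euclideanSpace]
  rw [finrank_span_singleton he0] at hfr
  have hfiber : ∀ b ∈ T, ({x ∈ C | wmap x = b}).card ≤ 2 := by
    intro b hb
    obtain ⟨x0, hx0C, hx0⟩ := Finset.mem_image.mp hb
    have hsub : ({x ∈ C | wmap x = b}) ⊆ {x0, -x0} := by
      intro z hz
      rw [Finset.mem_filter] at hz
      have hzx : wmap z = wmap x0 := by rw [hz.2, hx0]
      have hps : psiFun z = psiFun x0 := by
        have h2 := congrArg Subtype.val hzx
        show psiFun z = psiFun x0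
        have h3 : psiFun z - ((∑ i, z i * z i) / n) • eVec n
            = psiFun x0 - ((∑ i, x0 i * x0 i) / n) • eVec n := h2
        rw [hsq z hz.1, hsq x0 hx0C] at h3
        exact sub_left_inj.mp h3
      have hcoords : ∀ i j, z i * z j = x0 i * x0 j := by
        intro i j
        have h2 := congrFun (congrArg WithLp.ofLp hps) s(i, j)
        rw [psiFun_mk, psiFun_mk] at h2
        rcases eq_or_ne i j with rfl | hij
        · rw [if_pos rfl, one_mul, one_mul] at h2; exact h2
        · rw [if_neg hij] at h2
          exact mul_left_cancel₀ (Real.sqrt_ne_zero'.mpr (by norm_num)) h2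
      rcases eq_or_eq_neg_of_prod_eq (hunit z hz.1) hcoords with h | h
      · simp [h]
      · simp [h]
    calc ({x ∈ C | wmap x = b}).card ≤ ({x0, -x0} : Finset _).card :=
          Finset.card_le_card hsub
      _ ≤ 2 := (Finset.card_insert_le _ _).trans (by simp)
  have h2 : C.card ≤ 2 * T.card := by
    calc C.card = ∑ b ∈ T, ({x ∈ C | wmap x = b}).card :=
          Finset.card_eq_sum_card_image wmap C
      _ ≤ ∑ _b ∈ T, 2 := Finset.sum_le_sum hfiber
      _ = 2 * T.card := by rw [Finset.sum_const, smul_eq_mul, mul_comm]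
  have hm : Fintype.card (Sym2 (Fin n)) = (n + 1) * n / 2 := by
    rw [Sym2.card, Fintype.card_fin, Nat.choose_two_right]
    simp
  have hm' : Fintype.card (Sym2 (Fin n)) = n * (n + 1) / 2 := by rw [hm, Nat.mul_comm]
  obtain ⟨k, hk⟩ := Nat.even_mul_succ_self n
  omega
end
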